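/- Let Γ be the group generated by τ₁,…,τ₇, α, β, γ subject to: the τᵢ commute pairwise; α² = β² = γ² = 1; [α,β] = τ₆⁻¹, [α,γ] = τ₇⁻¹, [β,γ] = τ₇⁻¹; α conjugates τᵢ to τᵢ for i=1,2,3 and to τᵢ⁻¹ for i=4,5,6,7; β conjugates τᵢ to τᵢ for i=1,4,5 and to τᵢ⁻¹ for i=2,3,6,7; γ conjugates τᵢ to τᵢ for i=2,4,6 and to τᵢ⁻¹ for i=1,3,5,7. Then every homomorphism ρ: Γ → SO(3) whose image is irreducible (i.e., preserves no 1-dimensional subspace of ℝ³) satisfies ρ(τ₆) = ρ(τ₇) = 1. -/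

import Mathlib

open Matrix Module

lemma so3_det_sub_one (M : Matrix (Fin 3) (Fin 3) ℝ) (hMO : M * Mᵀ = 1) (hdet : M.det = 1) :
    (M - 1).det = 0 := by
  have h1 : M - 1 = M * (1 - Mᵀ) := by rw [Matrix.mul_sub, Matrix.mul_one, hMO]
  have h2 : (M - 1).det = (1 - Mᵀ).det := by rw [h1, Matrix.det_mul, hdet, one_mul]
  have h3 : (1 - Mᵀ) = (1 - M)ᵀ := by rw [Matrix.transpose_sub, Matrix.transpose_one]
  have h4 : (1 - M) = -(M - 1) := by abel
  have h5 : (M - 1).det = (-(M - 1)).det := by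
    rw [h2, h3, Matrix.det_transpose, h4]
  rw [Matrix.det_neg] at h5
  simp only [Fintype.card_fin] at h5
  norm_num at h5
  linarith

lemma so3_fix (M : Matrix (Fin 3) (Fin 3) ℝ) (hMO : M * Mᵀ = 1) (hdet : M.det = 1)
    (P : Matrix (Fin 3) (Fin 3) ℝ → Prop)
    (hP : ∀ X, P X → M * X = X * M ∨ (X * X = 1 ∧ X * M = M⁻¹ * X))
    (hne : ∀ W : Submodule ℝ (Fin 3 → ℝ),
       (∀ X, P X → ∀ v ∈ W, X.mulVec v ∈ W) → Module.finrank ℝ W ≠ 1) :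
    M = 1 := by
  have hu : IsUnit M.det := by rw [hdet]; exact isUnit_one
  have hMi : M⁻¹ * M = 1 := Matrix.nonsing_inv_mul M hu
  have hMMi : M * M⁻¹ = 1 := Matrix.mul_nonsing_inv M hu
  have hdet0 := so3_det_sub_one M hMO hdet
  set f := Matrix.mulVecLin (M - 1) with hf
  have hker : ∀ X, P X → ∀ v ∈ LinearMap.ker f, X.mulVec v ∈ LinearMap.ker f := by
    intro X hX v hv
    rw [LinearMap.mem_ker, hf, Matrix.mulVecLin_apply, Matrix.sub_mulVec,
      Matrix.one_mulVec, sub_eq_zero] at hv ⊢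
    have hinv : M⁻¹.mulVec v = v := by
      conv_lhs => rw [← hv]
      rw [Matrix.mulVec_mulVec, hMi, Matrix.one_mulVec]
    rcases hP X hX with hc | ⟨hX2, hXM⟩
    · rw [Matrix.mulVec_mulVec, hc, ← Matrix.mulVec_mulVec, hv]
    · have hMX : M * X = X * M⁻¹ := by
        calc M * X = M * X * (M * M⁻¹) := by rw [hMMi, Matrix.mul_one]
        _ = M * (X * M) * M⁻¹ := by noncomm_ring
        _ = M * (M⁻¹ * X) * M⁻¹ := by rw [hXM]
        _ = (M * M⁻¹) * X * M⁻¹ := by noncomm_ring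
        _ = X * M⁻¹ := by rw [hMMi, Matrix.one_mul]
      rw [Matrix.mulVec_mulVec, hMX, ← Matrix.mulVec_mulVec, hinv]
  have hrange : ∀ X, P X → ∀ v ∈ LinearMap.range f, X.mulVec v ∈ LinearMap.range f := by
    intro X hX v hv
    obtain ⟨u, rfl⟩ := hv
    rcases hP X hX with hc | ⟨hX2, hXM⟩
    · refine ⟨X.mulVec u, ?_⟩
      simp only [hf, Matrix.mulVecLin_apply, Matrix.mulVec_mulVec]
      rw [Matrix.sub_mul, Matrix.mul_sub, Matrix.one_mul, Matrix.mul_one, hc]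
    · refine ⟨(-(M⁻¹ * X)).mulVec u, ?_⟩
      simp only [hf, Matrix.mulVecLin_apply, Matrix.mulVec_mulVec]
      have key : (M - 1) * -(M⁻¹ * X) = X * (M - 1) :=
        calc (M - 1) * -(M⁻¹ * X) = -((M * M⁻¹) * X) + M⁻¹ * X := by noncomm_ring
        _ = M⁻¹ * X - X := by rw [hMMi]; noncomm_ring
        _ = X * M - X := by rw [← hXM]
        _ = X * (M - 1) := by noncomm_ring
      rw [key]
  have hkdim := hne _ hker
  have hrdim := hne _ hrange
  have hsum := LinearMap.finrank_range_add_finrank_ker f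
  rw [Module.finrank_fin_fun] at hsum
  have hpos : 0 < Module.finrank ℝ (LinearMap.ker f) := by
    obtain ⟨v, hv0, hv⟩ := (Matrix.exists_mulVec_eq_zero_iff).2 hdet0
    have hvm : v ∈ LinearMap.ker f := by
      rw [LinearMap.mem_ker, hf, Matrix.mulVecLin_apply, hv]
    have : Nontrivial (LinearMap.ker f) := ⟨⟨⟨v, hvm⟩, 0, by simp [Subtype.ext_iff, hv0]⟩⟩
    exact Module.finrank_pos_iff.mpr this
  have h3 : Module.finrank ℝ (LinearMap.ker f) = 3 := by omega
  have htop : LinearMap.ker f = ⊤ := by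
    apply Submodule.eq_top_of_finrank_eq
    rw [h3, Module.finrank_fin_fun]
  have hzero : ∀ v, M.mulVec v = v := by
    intro v
    have hv : v ∈ LinearMap.ker f := htop ▸ Submodule.mem_top
    rw [LinearMap.mem_ker, hf, Matrix.mulVecLin_apply, Matrix.sub_mulVec,
      Matrix.one_mulVec, sub_eq_zero] at hv
    exact hv
  ext i j
  have := congrFun (hzero (Pi.single j 1)) i
  rw [Matrix.mulVec_single] at this
  simp only [Pi.smul_apply, Matrix.col_apply, op_smul_eq_mul, mul_one] at this
  rw [this]
  simp [Matrix.one_apply, Pi.single_apply, eq_comm]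


set_option maxHeartbeats 1000000 in

/-- Let `Γ = ⟨τ₁, …, τ₇, α, β, γ⟩` be the orbifold fundamental group of Joyce's orbifold,
with the listed relations. Every homomorphism `ρ : Γ → SO(3)` with irreducible image
(preserving no 1-dimensional subspace of `ℝ³`) satisfies `ρ(τ₆) = ρ(τ₇) = 1`.
A homomorphism is encoded by the images `A, B, C` of `α, β, γ` and `t i` of `τ_{i+1}`
subject to the defining relations of `Γ`. -/
theorem stmt18 (A B C : Matrix (Fin 3) (Fin 3) ℝ) (t : Fin 7 → Matrix (Fin 3) (Fin 3) ℝ)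
    (hA : A ∈ Matrix.orthogonalGroup (Fin 3) ℝ ∧ A.det = 1)
    (hB : B ∈ Matrix.orthogonalGroup (Fin 3) ℝ ∧ B.det = 1)
    (hC : C ∈ Matrix.orthogonalGroup (Fin 3) ℝ ∧ C.det = 1)
    (ht : ∀ i, t i ∈ Matrix.orthogonalGroup (Fin 3) ℝ ∧ (t i).det = 1)
    -- the τᵢ commute pairwise
    (hτ : ∀ i j, t i * t j = t j * t i)
    -- α² = β² = γ² = 1
    (hA2 : A * A = 1) (hB2 : B * B = 1) (hC2 : C * C = 1)
    -- [α,β] = τ₆⁻¹, [α,γ] = τ₇⁻¹, [β,γ] = τ₇⁻¹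
    (hAB : A * B * A⁻¹ * B⁻¹ = (t 5)⁻¹)
    (hAC : A * C * A⁻¹ * C⁻¹ = (t 6)⁻¹)
    (hBC : B * C * B⁻¹ * C⁻¹ = (t 6)⁻¹)
    -- α fixes τ₁, τ₂, τ₃ and inverts τ₄, τ₅, τ₆, τ₇
    (hAfix : ∀ i ∈ ({0, 1, 2} : Set (Fin 7)), A * t i * A⁻¹ = t i)
    (hAinv : ∀ i ∈ ({3, 4, 5, 6} : Set (Fin 7)), A * t i * A⁻¹ = (t i)⁻¹)
    -- β fixes τ₁, τ₄, τ₅ and inverts τ₂, τ₃, τ₆, τ₇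
    (hBfix : ∀ i ∈ ({0, 3, 4} : Set (Fin 7)), B * t i * B⁻¹ = t i)
    (hBinv : ∀ i ∈ ({1, 2, 5, 6} : Set (Fin 7)), B * t i * B⁻¹ = (t i)⁻¹)
    -- γ fixes τ₂, τ₄, τ₆ and inverts τ₁, τ₃, τ₅, τ₇
    (hCfix : ∀ i ∈ ({1, 3, 5} : Set (Fin 7)), C * t i * C⁻¹ = t i)
    (hCinv : ∀ i ∈ ({0, 2, 4, 6} : Set (Fin 7)), C * t i * C⁻¹ = (t i)⁻¹)
    -- the image preserves no 1-dimensional subspace of ℝ³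
    (hirr : ∀ W : Submodule ℝ (Fin 3 → ℝ),
      (∀ v ∈ W, A.mulVec v ∈ W) → (∀ v ∈ W, B.mulVec v ∈ W) → (∀ v ∈ W, C.mulVec v ∈ W) →
      (∀ i, ∀ v ∈ W, (t i).mulVec v ∈ W) → Module.finrank ℝ W ≠ 1) :
    t 5 = 1 ∧ t 6 = 1 := by
  have hAi : A⁻¹ = A := Matrix.inv_eq_right_inv hA2
  have hBi : B⁻¹ = B := Matrix.inv_eq_right_inv hB2
  have hCi : C⁻¹ = C := Matrix.inv_eq_right_inv hC2
  set P : Matrix (Fin 3) (Fin 3) ℝ → Prop :=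
    fun X => X = A ∨ X = B ∨ X = C ∨ ∃ i, X = t i with hPdef
  have hne : ∀ W : Submodule ℝ (Fin 3 → ℝ),
      (∀ X, P X → ∀ v ∈ W, X.mulVec v ∈ W) → Module.finrank ℝ W ≠ 1 := by
    intro W h
    exact hirr W (h A (Or.inl rfl)) (h B (Or.inr (Or.inl rfl)))
      (h C (Or.inr (Or.inr (Or.inl rfl))))
      (fun i => h (t i) (Or.inr (Or.inr (Or.inr ⟨i, rfl⟩))))
  have horth : ∀ k : Fin 7, t k * (t k)ᵀ = 1 := by
    intro k
    have := (Matrix.mem_orthogonalGroup_iff (Fin 3) ℝ).1 (ht k).1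
    exact this
  -- generic: from `X * M * X⁻¹ = M⁻¹` with `X⁻¹ = X` and `X * X = 1`, get `X * M = M⁻¹ * X`
  have hinvert : ∀ (X M : Matrix (Fin 3) (Fin 3) ℝ), X * X = 1 → X * M * X = M⁻¹ →
      X * M = M⁻¹ * X := by
    intro X M hX2 h
    calc X * M = X * M * (X * X) := by rw [hX2, Matrix.mul_one]
      _ = (X * M * X) * X := by noncomm_ring
      _ = M⁻¹ * X := by rw [h]
  have hcommute : ∀ (X M : Matrix (Fin 3) (Fin 3) ℝ), X * X = 1 → X * M * X = M →
      M * X = X * M := by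
    intro X M hX2 h
    calc M * X = (X * X) * M * X := by rw [hX2, Matrix.one_mul]
      _ = X * (X * M * X) := by noncomm_ring
      _ = X * M := by rw [h]
  constructor
  · apply so3_fix (t 5) (horth 5) (ht 5).2 P _ hne
    intro X hX
    rcases hX with rfl | rfl | rfl | ⟨i, rfl⟩
    · right
      refine ⟨hA2, hinvert X (t 5) hA2 ?_⟩
      have h := hAinv 5 (by simp)
      rwa [hAi] at h
    · right
      refine ⟨hB2, hinvert X (t 5) hB2 ?_⟩
      have h := hBinv 5 (by simp)
      rwa [hBi] at h
    · left
      apply hcommute X (t 5) hC2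
      have h := hCfix 5 (by simp)
      rwa [hCi] at h
    · left
      exact hτ 5 i
  · apply so3_fix (t 6) (horth 6) (ht 6).2 P _ hne
    intro X hX
    rcases hX with rfl | rfl | rfl | ⟨i, rfl⟩
    · right
      refine ⟨hA2, hinvert X (t 6) hA2 ?_⟩
      have h := hAinv 6 (by simp)
      rwa [hAi] at h
    · right
      refine ⟨hB2, hinvert X (t 6) hB2 ?_⟩
      have h := hBinv 6 (by simp)
      rwa [hBi] at h
    · right
      refine ⟨hC2, hinvert X (t 6) hC2 ?_⟩
      have h := hCinv 6 (by simp)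
      rwa [hCi] at h
    · left
      exact hτ 6 i
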